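/- The minimum AWGN pseudoweight over all nonzero elements of the fundamental cone K(H) of a 0-1 matrix H is a lower bound on the minimum Hamming distance of the binary code C = ker H: for every nonzero codeword c ∈ C, w_p(c) equals its Hamming weight, hence inf over nonzero p ∈ K(H) of w_p(p) ≤ d_min(C), provided C contains a nonzero codeword. -/

import Mathlib

noncomputable def pseudoweight {n : ℕ} (p : Fin n → ℝ) : ℝ :=
  (∑ i, p i) ^ 2 / ∑ i, (p i) ^ 2

def fundamentalCone {m n : ℕ} (H : Fin m → Fin n → ℝ) : Set (Fin n → ℝ) :=
  { p | (∀ i, 0 ≤ p i) ∧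
        ∀ j i', (∑ i ∈ Finset.univ.erase i', H j i * p i) ≥ H j i' * p i' }

/-- Embedding of a binary vector into `ℝⁿ` as a 0-1 vector. -/
def embed {n : ℕ} (c : Fin n → ZMod 2) : Fin n → ℝ :=
  fun i => if c i = 1 then 1 else 0

/-!
A 0-1 vector `p` satisfies `∑ pᵢ² = ∑ pᵢ`, so its pseudoweight is its Hamming weight. A codeword
`c` meets every parity check with an even number of ones, so whenever `c` has a one in a position
of the check, the check has another one among its remaining positions; this is exactly the
fundamental-cone inequality, so the embedded codewords lie in `K(H)` and the infimum over the cone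
is at most the infimum over nonzero codewords.
-/

open Finset

lemma ZMod.val_sum_le {n : ℕ} {ι : Type*} (s : Finset ι) (f : ι → ZMod n) :
    (∑ i ∈ s, f i).val ≤ ∑ i ∈ s, (f i).val :=
  le_sum_of_subadditive ZMod.val ZMod.val_zero.le ZMod.val_add_le s f

lemma ZMod.val_le_sum_erase_val_of_sum_eq_zero {ι : Type*} [DecidableEq ι] {s : Finset ι}
    {f : ι → ZMod 2} (hf : ∑ i ∈ s, f i = 0) {k : ι} (hk : k ∈ s) :
    (f k).val ≤ ∑ i ∈ s.erase k, (f i).val := by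
  have hrest : ∑ i ∈ s.erase k, f i = f k := by
    rw [← add_sum_erase s f hk, add_eq_zero_iff_eq_neg', CharTwo.neg_eq] at hf
    exact hf
  exact hrest ▸ ZMod.val_sum_le _ _

lemma ZMod.val_mul_two (a b : ZMod 2) : (a * b).val = a.val * b.val := by
  decide +revert

lemma embed_apply_eq_val {n : ℕ} (c : Fin n → ZMod 2) (i : Fin n) :
    embed c i = (c i).val := by
  unfold embed
  have h : c i = 0 ∨ c i = 1 := by generalize c i = x; decide +revert
  rcases h with h | h <;> norm_num [h, ZMod.val_one]

lemma embed_sq {n : ℕ} (c : Fin n → ZMod 2) (i : Fin n) : embed c i ^ 2 = embed c i := by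
  unfold embed; split_ifs <;> norm_num

lemma embed_eq_zero_iff {n : ℕ} {c : Fin n → ZMod 2} : embed c = 0 ↔ c = 0 := by
  simp only [funext_iff, embed_apply_eq_val, Pi.zero_apply, Nat.cast_eq_zero, ZMod.val_eq_zero]

lemma sum_embed {n : ℕ} (c : Fin n → ZMod 2) : ∑ i, embed c i = #{i | c i ≠ 0} := by
  have h_eq_one_iff (x : ZMod 2) : x = 1 ↔ x ≠ 0 := by decide +revert
  simp only [embed, sum_boole, h_eq_one_iff]

lemma pseudoweight_nonneg {n : ℕ} (p : Fin n → ℝ) : 0 ≤ pseudoweight p := by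
  unfold pseudoweight; positivity

-- No `p ≠ 0` is needed: at `p = 0` both sides are `0` since `0 / 0 = 0`.
lemma pseudoweight_eq_sum_of_sq_eq_self {n : ℕ} {p : Fin n → ℝ} (hp : ∀ i, p i ^ 2 = p i) :
    pseudoweight p = ∑ i, p i := by
  rw [pseudoweight, Fintype.sum_congr _ _ hp, sq, mul_self_div_self]

lemma pseudoweight_embed {n : ℕ} (c : Fin n → ZMod 2) :
    pseudoweight (embed c) = #{i | c i ≠ 0} := by
  rw [pseudoweight_eq_sum_of_sq_eq_self (embed_sq c), sum_embed]

lemma embed_mem_fundamentalCone {m n : ℕ} {H : Fin m → Fin n → ZMod 2} {c : Fin n → ZMod 2}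
    (hc : ∀ j, ∑ i, H j i * c i = 0) :
    embed c ∈ fundamentalCone (fun j => embed (H j)) := by
  refine ⟨fun i => by rw [embed_apply_eq_val]; positivity, fun j k => ?_⟩
  simp only [embed_apply_eq_val, ← Nat.cast_mul, ← ZMod.val_mul_two]
  exact_mod_cast ZMod.val_le_sum_erase_val_of_sum_eq_zero (hc j) (mem_univ k)

theorem min_pseudoweight_le_dmin {m n : ℕ} (H : Fin m → Fin n → ZMod 2)
    (C : Set (Fin n → ZMod 2)) (hC : C = {c | ∀ j, ∑ i, H j i * c i = 0})
    (hne : ∃ c ∈ C, c ≠ 0) :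
    (∀ c ∈ C, c ≠ 0 →
      pseudoweight (embed c) =
        (Finset.univ.filter (fun i => c i ≠ 0)).card) ∧
    sInf (pseudoweight ''
        {p ∈ fundamentalCone (fun j i => if H j i = 1 then (1 : ℝ) else 0) | p ≠ 0}) ≤
      sInf ((fun c => ((Finset.univ.filter (fun i => c i ≠ 0)).card : ℝ)) ''
        {c ∈ C | c ≠ 0}) := by
  refine ⟨fun c _ _ => pseudoweight_embed c, ?_⟩
  obtain ⟨c₀, hc₀⟩ := hne
  refine csInf_le_csInf ⟨0, ?_⟩ ⟨_, c₀, hc₀, rfl⟩ ?_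
  · rintro _ ⟨p, -, rfl⟩
    exact pseudoweight_nonneg p
  · rintro _ ⟨c, ⟨hcC, hc0⟩, rfl⟩
    rw [hC] at hcC
    exact ⟨embed c, ⟨embed_mem_fundamentalCone hcC, embed_eq_zero_iff.not.mpr hc0⟩,
      pseudoweight_embed c⟩
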